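/- arXiv:1602.00436 — 6 statements merged into one kernel-verified Lean document; each statement's English description precedes it below -/
import Mathlib

section
/- For all real x with 0 < x < π/2, (sin x / x)^2 + (tan x)/x > 2. -/
open Real Set

namespace Real

theorem add_cube_div_three_lt_tan {x : ℝ} (h1 : 0 < x) (h2 : x < π / 2) :
    x + x ^ 3 / 3 < tan x := by
  have cos_ne {t : ℝ} (ht : t ∈ Ico 0 (π / 2)) : cos t ≠ 0 :=
    (cos_pos_of_mem_Ioo ⟨by linarith [pi_pos, ht.1], ht.2⟩).ne'
  have cont : ContinuousOn (fun t : ℝ => tan t - t - t ^ 3 / 3) (Ico 0 (π / 2)) :=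
    ((continuousOn_tan.mono fun _ ht => cos_ne ht).sub continuousOn_id).sub (by fun_prop)
  have deriv_pos (t : ℝ) (ht : t ∈ interior (Ico 0 (π / 2))) :
      0 < deriv (fun t : ℝ => tan t - t - t ^ 3 / 3) t := by
    rw [interior_Ico] at ht
    have hcos := cos_ne (Ioo_subset_Ico_self ht)
    have hd : HasDerivAt (fun t : ℝ => tan t - t - t ^ 3 / 3) (1 / cos t ^ 2 - 1 - t ^ 2) t := by
      refine (((hasDerivAt_tan hcos).sub (hasDerivAt_id' t)).sub
        ((hasDerivAt_pow 3 t).div_const 3)).congr_deriv ?_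
      norm_num
    -- `1 / cos² = 1 + tan²`, so the derivative is `tan² t - t²`, positive by `t < tan t`.
    rw [hd.deriv, one_div, ← inv_one_add_tan_sq hcos, inv_inv]
    have htan := lt_tan ht.1 ht.2
    nlinarith [mul_pos (sub_pos.2 htan) (add_pos (ht.1.trans htan) ht.1)]
  have mono := strictMonoOn_of_deriv_pos (convex_Ico 0 (π / 2)) cont deriv_pos
  have := mono ⟨le_rfl, by positivity⟩ ⟨h1.le, h2⟩ h1
  norm_num at this
  linarith

theorem one_sub_sq_div_six_lt_sin_div {x : ℝ} (hx : 0 < x) : 1 - x ^ 2 / 6 < sin x / x := by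
  rw [lt_div_iff₀ hx]
  linarith [sin_gt_sub_cube hx]

theorem one_add_sq_div_three_lt_tan_div {x : ℝ} (h1 : 0 < x) (h2 : x < π / 2) :
    1 + x ^ 2 / 3 < tan x / x := by
  rw [lt_div_iff₀ h1]
  linarith [add_cube_div_three_lt_tan h1 h2]

end Real

theorem stmt_0 (x : ℝ) (h1 : 0 < x) (h2 : x < π / 2) :
    (sin x / x) ^ 2 + tan x / x > 2 := by
  have hx : x < 2 := by linarith [pi_lt_four]
  have hsin_pos : 0 < 1 - x ^ 2 / 6 := by nlinarith
  have hsin : (1 - x ^ 2 / 6) ^ 2 < (sin x / x) ^ 2 :=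
    pow_lt_pow_left₀ (one_sub_sq_div_six_lt_sin_div h1) hsin_pos.le two_ne_zero
  have htan := one_add_sq_div_three_lt_tan_div h1 h2
  -- `(1 - x²/6)² + (1 + x²/3) = 2 + x⁴/36`
  nlinarith [pow_nonneg (sq_nonneg x) 2]
end

section
/- For all real x with 0 < x < π/2, 2 + (2/π)^4 · x^3 · tan x < (sin x / x)^2 + (tan x)/x < 2 + (8/45) · x^3 · tan x. -/
/-!
Multiplying by `x ^ 2 * cos x > 0` turns both inequalities into bounds on `wilkerDefect x` by
multiples of `x ^ 5 * sin x`. Away from `π / 2` one replaces `sin` and `cos` by their Taylor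
polynomials, which alternately over- and underestimate them on `[0, ∞)`; what is left is a
polynomial inequality in `x ^ 2`, certified by positive Bernstein coefficients. For the lower
bound this works up to `x = 7 / 5` with the constant `23 / 140 > (2 / π) ^ 4`. Near `π / 2`, where
`(2 / π) ^ 4` is sharp, one writes `x = π / 2 - t` and uses `sin t < t` and
`cos t ≥ 1 - t ^ 2 / 2`; the remaining polynomial inequality in `t` and `π` only needs `π` to
four decimals.
-/

open Real Finset Nat

theorem nonneg_of_hasDerivAt_nonneg {f f' : ℝ → ℝ} (hf : ∀ y, HasDerivAt f (f' y) y)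
    (hf' : ∀ y, 0 ≤ y → 0 ≤ f' y) (h0 : f 0 = 0) {x : ℝ} (hx : 0 ≤ x) : 0 ≤ f x := by
  have hmono : MonotoneOn f (Set.Ici 0) :=
    monotoneOn_of_hasDerivWithinAt_nonneg (convex_Ici 0)
      (fun y _ => (hf y).continuousAt.continuousWithinAt)
      (fun y _ => (hf y).hasDerivWithinAt)
      (fun y hy => hf' y (interior_subset hy))
  simpa [h0] using hmono Set.self_mem_Ici hx hx

noncomputable def sinTaylor (n : ℕ) (x : ℝ) : ℝ :=
  ∑ k ∈ range n, (-1) ^ k * x ^ (2 * k + 1) / (2 * k + 1)!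

noncomputable def cosTaylor (n : ℕ) (x : ℝ) : ℝ :=
  ∑ k ∈ range n, (-1) ^ k * x ^ (2 * k) / (2 * k)!

theorem hasDerivAt_sinTaylor (n : ℕ) (x : ℝ) :
    HasDerivAt (sinTaylor n) (cosTaylor n x) x := by
  unfold sinTaylor cosTaylor
  refine HasDerivAt.fun_sum fun k _ => ?_
  refine (((hasDerivAt_pow (2 * k + 1) x).const_mul ((-1 : ℝ) ^ k)).div_const
    ((2 * k + 1)! : ℝ)).congr_deriv ?_
  rw [Nat.factorial_succ]
  push_cast
  field_simp

theorem hasDerivAt_cosTaylor (n : ℕ) (x : ℝ) :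
    HasDerivAt (cosTaylor (n + 1)) (-sinTaylor n x) x := by
  have hsplit : cosTaylor (n + 1) =
      fun y => 1 - ∑ k ∈ range n, (-1 : ℝ) ^ k * y ^ (2 * k + 2) / (2 * k + 2)! := by
    funext y
    simp [cosTaylor, sum_range_succ', pow_succ, neg_div, sub_eq_add_neg, add_comm, mul_add]
  rw [hsplit, sinTaylor]
  refine ((hasDerivAt_const x (1 : ℝ)).fun_sub
    (HasDerivAt.fun_sum fun k _ => ?_)).congr_deriv (zero_sub _)
  refine (((hasDerivAt_pow (2 * k + 2) x).const_mul ((-1 : ℝ) ^ k)).div_const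
    ((2 * k + 2)! : ℝ)).congr_deriv ?_
  rw [Nat.factorial_succ (2 * k + 1)]
  push_cast
  field_simp
  ring

section TaylorBounds

variable {x : ℝ}

theorem neg_one_pow_mul_sin_sub_sinTaylor_nonneg_of {m : ℕ}
    (hcos : ∀ y, 0 ≤ y → 0 ≤ (-1) ^ m * (cos y - cosTaylor m y)) (hx : 0 ≤ x) :
    0 ≤ (-1) ^ m * (sin x - sinTaylor m x) :=
  nonneg_of_hasDerivAt_nonneg
    (fun y => ((hasDerivAt_sin y).sub (hasDerivAt_sinTaylor m y)).const_mul _) hcos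
    (by simp [sinTaylor]) hx

theorem neg_one_pow_mul_cos_sub_cosTaylor_succ_nonneg_of {m : ℕ}
    (hsin : ∀ y, 0 ≤ y → 0 ≤ (-1) ^ m * (sin y - sinTaylor m y)) (hx : 0 ≤ x) :
    0 ≤ (-1) ^ (m + 1) * (cos x - cosTaylor (m + 1) x) :=
  nonneg_of_hasDerivAt_nonneg
    (fun y => (((hasDerivAt_cos y).sub (hasDerivAt_cosTaylor m y)).const_mul _).congr_deriv
      (by ring))
    hsin (by simp [cosTaylor, sum_range_succ']) hx

theorem neg_one_pow_mul_cos_sub_cosTaylor_nonneg (m : ℕ) (hx : 0 ≤ x) :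
    0 ≤ (-1) ^ (m + 1) * (cos x - cosTaylor (m + 1) x) := by
  induction m generalizing x with
  | zero => simpa [cosTaylor] using cos_le_one x
  | succ m ih =>
    exact neg_one_pow_mul_cos_sub_cosTaylor_succ_nonneg_of
      (fun y hy => neg_one_pow_mul_sin_sub_sinTaylor_nonneg_of (fun z hz => ih hz) hy) hx

theorem neg_one_pow_mul_sin_sub_sinTaylor_nonneg (m : ℕ) (hx : 0 ≤ x) :
    0 ≤ (-1) ^ (m + 1) * (sin x - sinTaylor (m + 1) x) :=
  neg_one_pow_mul_sin_sub_sinTaylor_nonneg_of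
    (fun _ hy => neg_one_pow_mul_cos_sub_cosTaylor_nonneg m hy) hx

theorem sin_le_sinTaylor (hx : 0 ≤ x) (n : ℕ) : sin x ≤ sinTaylor (2 * n + 1) x := by
  have := neg_one_pow_mul_sin_sub_sinTaylor_nonneg (2 * n) hx
  rw [(odd_two_mul_add_one n).neg_one_pow] at this
  linarith

theorem sinTaylor_le_sin (hx : 0 ≤ x) (n : ℕ) : sinTaylor (2 * n + 2) x ≤ sin x := by
  have := neg_one_pow_mul_sin_sub_sinTaylor_nonneg (2 * n + 1) hx
  rw [pow_succ, (odd_two_mul_add_one n).neg_one_pow] at this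
  linarith

theorem cos_le_cosTaylor (hx : 0 ≤ x) (n : ℕ) : cos x ≤ cosTaylor (2 * n + 1) x := by
  have := neg_one_pow_mul_cos_sub_cosTaylor_nonneg (2 * n) hx
  rw [(odd_two_mul_add_one n).neg_one_pow] at this
  linarith

theorem cosTaylor_le_cos (hx : 0 ≤ x) (n : ℕ) : cosTaylor (2 * n + 2) x ≤ cos x := by
  have := neg_one_pow_mul_cos_sub_cosTaylor_nonneg (2 * n + 1) hx
  rw [pow_succ, (odd_two_mul_add_one n).neg_one_pow] at this
  linarith

end TaylorBounds

theorem bernstein_form_pos {n : ℕ} (c : Fin (n + 1) → ℝ) (hc : ∀ j, 0 < c j) {a u : ℝ}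
    (hu : 0 < u) (hua : u ≤ a) :
    0 < ∑ j : Fin (n + 1), c j * u ^ (j : ℕ) * (a - u) ^ (n - j) := by
  refine sum_pos' (fun j _ => ?_)
    ⟨Fin.last n, mem_univ _, by simpa using mul_pos (hc _) (pow_pos hu n)⟩
  exact mul_nonneg (mul_nonneg (hc j).le (pow_nonneg hu.le _)) (pow_nonneg (sub_nonneg.2 hua) _)

theorem wilker_taylor_upper {x : ℝ} (hx : 0 < x) (hx2 : x ^ 2 ≤ 4) :
    sinTaylor 5 x ^ 2 * cosTaylor 5 x + x * sinTaylor 5 x - 2 * x ^ 2 * cosTaylor 4 x <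
      8 / 45 * x ^ 5 * sinTaylor 4 x := by
  -- Bernstein coefficients on `[0, 4]` of the difference, divided by `(x ^ 2) ^ 4`, in `x ^ 2`
  have := mul_pos (pow_pos (pow_pos hx 2) 4) (bernstein_form_pos
    ![1/30965760, 79/314572800, 9601/11147673600, 1065247/624269721600,
      5026033/2341011456000, 42678301/24078974976000, 80475373/84276412416000,
      17751203/55306395648000, 319495061/5309413982208000, 12364631/2654706991104000]
    (fun j => by fin_cases j <;> norm_num) (pow_pos hx 2) hx2)
  norm_num [Fin.sum_univ_succ, sinTaylor, cosTaylor, sum_range_succ, factorial] at this ⊢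
  linear_combination this

theorem wilker_taylor_lower {x : ℝ} (hx : 0 < x) (hx2 : x ^ 2 ≤ 2) :
    23 / 140 * x ^ 5 * sinTaylor 5 x <
      sinTaylor 4 x ^ 2 * cosTaylor 4 x + x * sinTaylor 4 x - 2 * x ^ 2 * cosTaylor 5 x := by
  have := mul_pos (pow_pos (pow_pos hx 2) 3) (bernstein_form_pos
    ![17/161280, 23/40320, 347/268800, 319607/203212800, 44819/40642560,
      2668963/6096384000, 35989/406425600, 3469/522547200]
    (fun j => by fin_cases j <;> norm_num) (pow_pos hx 2) hx2)
  norm_num [Fin.sum_univ_succ, sinTaylor, cosTaylor, sum_range_succ, factorial] at this ⊢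
  linear_combination this

theorem wilker_poly_le {p t : ℝ} (hp0 : 3.1415 < p) (hp1 : p < 3.1416) (ht0 : 0 ≤ t)
    (ht1 : t ≤ 1 / 5) :
    p ^ 4 * t * (2 * (p / 2 - t) ^ 2 - (1 - t ^ 2 / 2) ^ 2) ≤
      (p / 2 - t) * (1 - t ^ 2 / 2) * (p ^ 4 - (p - 2 * t) ^ 4) := by
  have hp : 0 < p := by linarith
  have lo (n : ℕ) (hn : n ≠ 0) : (3.1415 : ℝ) ^ n < p ^ n :=
    pow_lt_pow_left₀ hp0 (by norm_num) hn
  have hi (n : ℕ) (hn : n ≠ 0) : p ^ n < (3.1416 : ℝ) ^ n := pow_lt_pow_left₀ hp1 hp.le hn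
  have hc0 : 6 ≤ 5 * p ^ 4 - p ^ 6 / 2 := by nlinarith [lo 4 (by norm_num), hi 6 (by norm_num)]
  have hc1 : -9 ≤ 2 * p ^ 5 - 20 * p ^ 3 := by nlinarith [lo 5 (by norm_num), hi 3 (by norm_num)]
  have hc2 : -93 ≤ 40 * p ^ 2 - 5 * p ^ 4 := by nlinarith [lo 2 (by norm_num), hi 4 (by norm_num)]
  have hc3 : 0 ≤ 10 * p ^ 3 - 40 * p := by nlinarith [lo 2 (by norm_num)]
  have hc4 : -182 ≤ 16 - 20 * p ^ 2 + p ^ 4 / 4 := by nlinarith [hi 2 (by norm_num), pow_pos hp 4]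
  have ht2 : t ^ 2 ≤ 1 / 25 := by nlinarith
  have ht4 : t ^ 4 ≤ 1 / 625 := by nlinarith
  have ht6 : t ^ 6 ≤ 1 / 15625 := by nlinarith
  -- the difference of the two sides is `t` times this polynomial
  have hΔ : 0 ≤ (5 * p ^ 4 - p ^ 6 / 2) + (2 * p ^ 5 - 20 * p ^ 3) * t +
      (40 * p ^ 2 - 5 * p ^ 4) * t ^ 2 + (10 * p ^ 3 - 40 * p) * t ^ 3 +
      (16 - 20 * p ^ 2 + p ^ 4 / 4) * t ^ 4 + 20 * p * t ^ 5 - 8 * t ^ 6 := by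
    nlinarith [mul_le_mul_of_nonneg_right hc1 ht0,
      mul_le_mul_of_nonneg_right hc2 (pow_nonneg ht0 2),
      mul_nonneg hc3 (pow_nonneg ht0 3), mul_le_mul_of_nonneg_right hc4 (pow_nonneg ht0 4),
      mul_nonneg hp.le (pow_nonneg ht0 5)]
  linear_combination mul_nonneg ht0 hΔ

-- `x ^ 2 * cos x * ((sin x / x) ^ 2 + tan x / x - 2)`
noncomputable def wilkerDefect (x : ℝ) : ℝ :=
  sin x ^ 2 * cos x + x * sin x - 2 * x ^ 2 * cos x

section WilkerDefect

variable {x : ℝ}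

theorem wilkerDefect_le_taylor (hx0 : 0 ≤ x) (hx : x ≤ π / 2) :
    wilkerDefect x ≤
      sinTaylor 5 x ^ 2 * cosTaylor 5 x + x * sinTaylor 5 x - 2 * x ^ 2 * cosTaylor 4 x := by
  have hsin : 0 ≤ sin x := sin_nonneg_of_nonneg_of_le_pi hx0 (by linarith [pi_pos])
  have hcos : 0 ≤ cos x := cos_nonneg_of_mem_Icc ⟨by linarith [pi_pos], hx⟩
  have hS : sin x ≤ sinTaylor 5 x := sin_le_sinTaylor hx0 2
  have hC : cos x ≤ cosTaylor 5 x := cos_le_cosTaylor hx0 2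
  have hC' : cosTaylor 4 x ≤ cos x := cosTaylor_le_cos hx0 1
  unfold wilkerDefect
  gcongr

theorem taylor_le_wilkerDefect (hx0 : 0 ≤ x) (hS₀ : 0 ≤ sinTaylor 4 x)
    (hC₀ : 0 ≤ cosTaylor 4 x) :
    sinTaylor 4 x ^ 2 * cosTaylor 4 x + x * sinTaylor 4 x - 2 * x ^ 2 * cosTaylor 5 x ≤
      wilkerDefect x := by
  have hS : sinTaylor 4 x ≤ sin x := sinTaylor_le_sin hx0 1
  have hC : cosTaylor 4 x ≤ cos x := cosTaylor_le_cos hx0 1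
  have hC' : cos x ≤ cosTaylor 5 x := cos_le_cosTaylor hx0 2
  unfold wilkerDefect
  gcongr

theorem wilkerDefect_lt (hx0 : 0 < x) (hx : x ≤ π / 2) :
    wilkerDefect x < 8 / 45 * (x ^ 5 * sin x) := by
  have hx2 : x ^ 2 ≤ 4 := by nlinarith [pi_lt_d2]
  calc wilkerDefect x
      ≤ sinTaylor 5 x ^ 2 * cosTaylor 5 x + x * sinTaylor 5 x - 2 * x ^ 2 * cosTaylor 4 x :=
        wilkerDefect_le_taylor hx0.le hx
    _ < 8 / 45 * x ^ 5 * sinTaylor 4 x := wilker_taylor_upper hx0 hx2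
    _ ≤ 8 / 45 * (x ^ 5 * sin x) := by
        rw [mul_assoc]
        gcongr
        exact sinTaylor_le_sin hx0.le 1

theorem lt_wilkerDefect_of_sq_le_two (hx0 : 0 < x) (hx2 : x ^ 2 ≤ 2) :
    23 / 140 * (x ^ 5 * sin x) < wilkerDefect x := by
  have hS₀ : 0 ≤ sinTaylor 4 x := by
    norm_num [sinTaylor, sum_range_succ, factorial]
    nlinarith [pow_pos hx0 3, pow_pos hx0 5, pow_pos hx0 7]
  have hC₀ : 0 ≤ cosTaylor 4 x := by
    norm_num [cosTaylor, sum_range_succ, factorial]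
    nlinarith [pow_pos hx0 4, pow_pos hx0 6]
  calc 23 / 140 * (x ^ 5 * sin x)
      ≤ 23 / 140 * x ^ 5 * sinTaylor 5 x := by
        rw [mul_assoc]
        gcongr
        exact sin_le_sinTaylor hx0.le 2
    _ < sinTaylor 4 x ^ 2 * cosTaylor 4 x + x * sinTaylor 4 x - 2 * x ^ 2 * cosTaylor 5 x :=
        wilker_taylor_lower hx0 hx2
    _ ≤ wilkerDefect x := taylor_le_wilkerDefect hx0.le hS₀ hC₀

theorem sixteen_mul_lt_pi_pow_four_mul_wilkerDefect (hx0 : 7 / 5 ≤ x) (hx : x < π / 2) :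
    16 * (x ^ 5 * sin x) < π ^ 4 * wilkerDefect x := by
  obtain ⟨t, rfl⟩ : ∃ t, x = π / 2 - t := ⟨π / 2 - x, by ring⟩
  have ht0 : 0 < t := by linarith
  have ht1 : t ≤ 1 / 5 := by linarith [pi_lt_d4]
  have hcos : 1 - t ^ 2 / 2 ≤ cos t := one_sub_sq_div_two_le_cos
  have hcos₀ : 0 ≤ 1 - t ^ 2 / 2 := by nlinarith
  have hsin : sin t < t := sin_lt ht0
  have hsin₀ : 0 < sin t := sin_pos_of_pos_of_lt_pi ht0 (by linarith [pi_gt_three])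
  have hK : 0 ≤ (π / 2 - t) * (π ^ 4 - (π - 2 * t) ^ 4) :=
    mul_nonneg (by linarith) (sub_nonneg.2 (pow_le_pow_left₀ (by linarith) (by linarith) 4))
  have hA : 0 < 2 * (π / 2 - t) ^ 2 - (1 - t ^ 2 / 2) ^ 2 := by nlinarith
  have hsq : (1 - t ^ 2 / 2) ^ 2 ≤ cos t ^ 2 := pow_le_pow_left₀ hcos₀ hcos 2
  have hmain : sin t * (2 * (π / 2 - t) ^ 2 - cos t ^ 2) <
      t * (2 * (π / 2 - t) ^ 2 - (1 - t ^ 2 / 2) ^ 2) := by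
    calc sin t * (2 * (π / 2 - t) ^ 2 - cos t ^ 2)
        ≤ sin t * (2 * (π / 2 - t) ^ 2 - (1 - t ^ 2 / 2) ^ 2) := by gcongr
      _ < t * (2 * (π / 2 - t) ^ 2 - (1 - t ^ 2 / 2) ^ 2) := by gcongr
  have hpoly := wilker_poly_le pi_gt_d4 pi_lt_d4 ht0.le ht1
  rw [wilkerDefect, sin_pi_div_two_sub, cos_pi_div_two_sub]
  nlinarith [mul_le_mul_of_nonneg_right hcos hK, mul_lt_mul_of_pos_left hmain (pow_pos pi_pos 4)]

theorem two_div_pi_pow_four_mul_lt_wilkerDefect (hx0 : 0 < x) (hx : x < π / 2) :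
    (2 / π) ^ 4 * (x ^ 5 * sin x) < wilkerDefect x := by
  have hsin : 0 < sin x := sin_pos_of_pos_of_lt_pi hx0 (by linarith [pi_pos])
  rcases le_or_gt x (7 / 5) with hx1 | hx1
  · calc (2 / π) ^ 4 * (x ^ 5 * sin x) ≤ 23 / 140 * (x ^ 5 * sin x) := by
          gcongr
          rw [div_pow, div_le_iff₀ (by positivity)]
          nlinarith [pow_lt_pow_left₀ pi_gt_d4 (by norm_num) four_ne_zero]
      _ < wilkerDefect x := lt_wilkerDefect_of_sq_le_two hx0 (by nlinarith)
  · rw [div_pow, div_mul_eq_mul_div, div_lt_iff₀ (by positivity), mul_comm (wilkerDefect x),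
      show (2 : ℝ) ^ 4 = 16 by norm_num]
    exact sixteen_mul_lt_pi_pow_four_mul_wilkerDefect hx1.le hx

end WilkerDefect

theorem stmt_1 (x : ℝ) (h1 : 0 < x) (h2 : x < π / 2) :
    2 + (2 / π) ^ 4 * x ^ 3 * tan x < (sin x / x) ^ 2 + tan x / x ∧
      (sin x / x) ^ 2 + tan x / x < 2 + (8 / 45) * x ^ 3 * tan x := by
  have hcos : 0 < cos x := cos_pos_of_mem_Ioo ⟨by linarith, h2⟩
  have hD : 0 < x ^ 2 * cos x := by positivity
  have hlhs : (sin x / x) ^ 2 + tan x / x = 2 + wilkerDefect x / (x ^ 2 * cos x) := by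
    rw [wilkerDefect, tan_eq_sin_div_cos]
    field_simp
    ring
  have htan : x ^ 3 * tan x = x ^ 5 * sin x / (x ^ 2 * cos x) := by
    rw [tan_eq_sin_div_cos]
    field_simp
  rw [hlhs, mul_assoc, mul_assoc, htan, ← mul_div_assoc, ← mul_div_assoc]
  constructor
  · gcongr
    exact two_div_pi_pow_four_mul_lt_wilkerDefect h1 h2
  · gcongr
    exact wilkerDefect_lt h1 h2.le
end

section
/- For all real x with 0 < |x| < π/2, 2·(sin x / x) + (tan x)/x > 3. -/
/-!
The function `2 sin y + tan y - 3 y` vanishes at `0`, and its derivative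
`2 cos y + 1 / cos² y - 3 = (cos y - 1)² (2 cos y + 1) / cos² y` is positive on `(0, π/2)`,
so it is positive there. Since `sin` and `tan` are odd, the quotients by `x` are even in `x`,
which reduces the claim to `x > 0`.
-/

open Real Set

lemma Function.Odd.apply_abs_div_abs {α : Type*} [Field α] [LinearOrder α] [IsStrictOrderedRing α]
    {f : α → α} (hf : Function.Odd f) (x : α) : f |x| / |x| = f x / x := by
  rcases abs_choice x with h | h <;> rw [h]
  rw [hf x, neg_div_neg_eq]

lemma two_mul_add_one_div_sq_sub_three_pos {c : ℝ} (hc : 0 < c) (hc1 : c ≠ 1) :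
    0 < 2 * c + 1 / c ^ 2 - 3 := by
  have hne : c - 1 ≠ 0 := sub_ne_zero.2 hc1
  have hfactor : 2 * c + 1 / c ^ 2 - 3 = (c - 1) ^ 2 * (2 * c + 1) / c ^ 2 := by
    field_simp
    ring
  rw [hfactor]
  positivity

lemma hasDerivAt_two_mul_sin_add_tan_sub_three_mul {x : ℝ} (hx : cos x ≠ 0) :
    HasDerivAt (fun y => 2 * sin y + tan y - 3 * y) (2 * cos x + 1 / cos x ^ 2 - 3) x :=
  ((((hasDerivAt_sin x).const_mul 2).add (hasDerivAt_tan hx)).sub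
    ((hasDerivAt_id x).const_mul 3)).congr_deriv (by ring)

lemma strictMonoOn_two_mul_sin_add_tan_sub_three_mul :
    StrictMonoOn (fun y => 2 * sin y + tan y - 3 * y) (Ico 0 (π / 2)) := by
  have hcos : ∀ y ∈ Ico 0 (π / 2), 0 < cos y := fun y hy =>
    cos_pos_of_mem_Ioo ⟨by linarith [hy.1, pi_pos], hy.2⟩
  refine strictMonoOn_of_deriv_pos (convex_Ico 0 (π / 2)) (fun y hy => ?_) (fun y hy => ?_)
  · exact (hasDerivAt_two_mul_sin_add_tan_sub_three_mul (hcos y hy).ne').continuousAt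
      |>.continuousWithinAt
  · rw [interior_Ico] at hy
    have hcos_pos := hcos y (Ioo_subset_Ico_self hy)
    have hcos_ne_one : cos y ≠ 1 := fun h =>
      hy.1.ne' <| (cos_eq_one_iff_of_lt_of_lt (by linarith [hy.1, pi_pos])
        (by linarith [hy.2, pi_pos])).1 h
    rw [(hasDerivAt_two_mul_sin_add_tan_sub_three_mul hcos_pos.ne').deriv]
    exact two_mul_add_one_div_sq_sub_three_pos hcos_pos hcos_ne_one

lemma three_mul_lt_two_mul_sin_add_tan {x : ℝ} (h0 : 0 < x) (h : x < π / 2) :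
    3 * x < 2 * sin x + tan x := by
  have := strictMonoOn_two_mul_sin_add_tan_sub_three_mul
    (left_mem_Ico.2 (by positivity)) ⟨h0.le, h⟩ h0
  simp only [sin_zero, tan_zero, mul_zero, add_zero, sub_zero] at this
  linarith

theorem stmt_2 (x : ℝ) (h1 : 0 < |x|) (h2 : |x| < π / 2) :
    2 * (sin x / x) + tan x / x > 3 := by
  rw [← Function.Odd.apply_abs_div_abs (f := sin) sin_neg,
    ← Function.Odd.apply_abs_div_abs (f := tan) tan_neg,
    mul_div_assoc', ← add_div, gt_iff_lt, lt_div_iff₀ h1]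
  exact three_mul_lt_two_mul_sin_add_tan h1 h2
end

section
/- For all real x with 0 < |x| < π/2, (x / sin x)^2 + x/(tan x) > 2. -/
/-!
Clearing denominators, the inequality for `0 < x < π/2` reads `2 sin² x < x² + x sin x cos x`.
The gap `x² + x sin x cos x - 2 sin² x` vanishes at `0`, as does its derivative
`2x + x (cos² x - sin² x) - 3 sin x cos x`, whose own derivative `4 sin x (sin x - x cos x)` is
positive on `(0, π/2)` because `x < tan x` there. Both sides are even in `x`.
-/

open Real Set

lemma pos_of_hasDerivAt_pos {f f' : ℝ → ℝ} {a x : ℝ} (hf : ∀ y, HasDerivAt f (f' y) y)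
    (h0 : f 0 = 0) (hf' : ∀ y ∈ Ioo 0 a, 0 < f' y) (hx : x ∈ Ioc 0 a) : 0 < f x := by
  have hmono : StrictMonoOn f (Icc 0 a) :=
    strictMonoOn_of_hasDerivWithinAt_pos (convex_Icc 0 a)
      (HasDerivAt.continuousOn fun y _ ↦ hf y) (fun y _ ↦ (hf y).hasDerivWithinAt)
      (by simpa only [interior_Icc] using hf')
  exact h0 ▸ hmono ⟨le_rfl, hx.1.le.trans hx.2⟩ ⟨hx.1.le, hx.2⟩ hx.1

namespace Real

lemma sin_sub_mul_cos_pos {x : ℝ} (hx0 : 0 < x) (hx : x < π / 2) : 0 < sin x - x * cos x := by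
  have hcos : 0 < cos x := cos_pos_of_mem_Ioo ⟨by linarith, hx⟩
  have htan := lt_tan hx0 hx
  rw [tan_eq_sin_div_cos, lt_div_iff₀ hcos] at htan
  linarith

lemma hasDerivAt_wilkerGap (y : ℝ) :
    HasDerivAt (fun y ↦ y ^ 2 + y * (sin y * cos y) - 2 * sin y ^ 2)
      (2 * y + y * (cos y ^ 2 - sin y ^ 2) - 3 * (sin y * cos y)) y := by
  have h := (((hasDerivAt_id y).pow 2).add ((hasDerivAt_id y).mul
    ((hasDerivAt_sin y).mul (hasDerivAt_cos y)))).sub (((hasDerivAt_sin y).pow 2).const_mul 2)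
  refine h.congr_deriv ?_
  simp only [id_eq, Pi.mul_apply]
  ring

lemma hasDerivAt_wilkerGap_deriv (y : ℝ) :
    HasDerivAt (fun y ↦ 2 * y + y * (cos y ^ 2 - sin y ^ 2) - 3 * (sin y * cos y))
      (4 * sin y * (sin y - y * cos y)) y := by
  have h := (((hasDerivAt_id y).const_mul 2).add ((hasDerivAt_id y).mul
    (((hasDerivAt_cos y).pow 2).sub ((hasDerivAt_sin y).pow 2)))).sub
    (((hasDerivAt_sin y).mul (hasDerivAt_cos y)).const_mul 3)
  refine h.congr_deriv ?_
  simp only [id_eq, Pi.sub_apply, Pi.pow_apply]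
  linear_combination -2 * sin_sq_add_cos_sq y

lemma two_mul_sin_sq_lt {x : ℝ} (hx0 : 0 < x) (hx : x < π / 2) :
    2 * sin x ^ 2 < x ^ 2 + x * (sin x * cos x) := by
  have hderiv (y : ℝ) (hy : y ∈ Ioo 0 (π / 2)) :=
    pos_of_hasDerivAt_pos hasDerivAt_wilkerGap_deriv (by simp) (fun z hz ↦
      mul_pos (mul_pos four_pos (sin_pos_of_pos_of_lt_pi hz.1 (by linarith [hz.2, pi_pos])))
        (sin_sub_mul_cos_pos hz.1 hz.2)) ⟨hy.1, hy.2.le⟩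
  have hgap := pos_of_hasDerivAt_pos hasDerivAt_wilkerGap (by simp) hderiv ⟨hx0, hx.le⟩
  linarith

lemma two_lt_sq_div_sin_add_div_tan {x : ℝ} (hx0 : 0 < x) (hx : x < π / 2) :
    2 < (x / sin x) ^ 2 + x / tan x := by
  have hsin : 0 < sin x := sin_pos_of_pos_of_lt_pi hx0 (by linarith [pi_pos])
  have hcos : 0 < cos x := cos_pos_of_mem_Ioo ⟨by linarith, hx⟩
  have h := two_mul_sin_sq_lt hx0 hx
  rw [tan_eq_sin_div_cos, div_div_eq_mul_div, div_pow,
    div_add_div _ _ (by positivity) hsin.ne', lt_div_iff₀ (by positivity)]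
  nlinarith

end Real

theorem stmt_3 (x : ℝ) (h1 : 0 < |x|) (h2 : |x| < π / 2) :
    (x / sin x) ^ 2 + x / tan x > 2 := by
  rcases (abs_pos.mp h1).lt_or_gt with hneg | hpos
  · rw [abs_of_neg hneg] at h2
    simpa [neg_div_neg_eq] using two_lt_sq_div_sin_add_div_tan (neg_pos.2 hneg) h2
  · rw [abs_of_pos hpos] at h2
    exact two_lt_sq_div_sin_add_div_tan hpos h2
end

section
/- For all real x with 0 < |x| < π/2, (1/2)·[(x/sin x)^2 + x/tan x] > (2·(x/sin x) + x/tan x)/3 > 1. -/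
/-!
Write `s = x / sin x` and `t = x / tan x`; both are even in `x`, so take `x > 0`. The second
inequality, `2 s + t > 3`, is the Cusa–Huygens inequality `3 sin x < x (2 + cos x)`, valid on
`(0, π)`: the difference vanishes at `0` with derivative `2 - 2 cos x - x sin x`, which vanishes
at `0` with derivative `sin x - x cos x`, which vanishes at `0` with derivative `x sin x > 0`.
The first inequality then follows from `3 (s² + t) - 2 (2 s + t) = 3 (s - 1)² + (2 s + t - 3)`.
-/

open Real

open Set in
lemma lt_of_hasDerivAt_pos {f f' : ℝ → ℝ} {a b : ℝ} (hf : ∀ x, HasDerivAt f (f' x) x)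
    (hf' : ∀ x ∈ Ioo a b, 0 < f' x) (hab : a < b) : f a < f b := by
  obtain ⟨c, hc, hslope⟩ := exists_hasDerivAt_eq_slope f f' hab
    (fun x _ ↦ (hf x).continuousAt.continuousWithinAt) (fun x _ ↦ hf x)
  have := hf' c hc
  rw [hslope, div_pos_iff_of_pos_right (sub_pos.mpr hab)] at this
  linarith

lemma mul_cos_lt_sin {x : ℝ} (h0 : 0 < x) (h : x < π) : x * cos x < sin x := by
  have hderiv (y : ℝ) : HasDerivAt (fun y ↦ sin y - y * cos y) (y * sin y) y := by
    refine ((hasDerivAt_sin y).sub ((hasDerivAt_id' y).mul (hasDerivAt_cos y))).congr_deriv ?_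
    ring
  have := lt_of_hasDerivAt_pos hderiv
    (fun y hy ↦ mul_pos hy.1 (sin_pos_of_pos_of_lt_pi hy.1 (hy.2.trans h))) h0
  simp only [sin_zero, zero_mul, sub_zero] at this
  linarith

lemma mul_sin_lt_two_sub_two_mul_cos {x : ℝ} (h0 : 0 < x) (h : x < π) :
    x * sin x < 2 - 2 * cos x := by
  have hderiv (y : ℝ) : HasDerivAt (fun y ↦ 2 - 2 * cos y - y * sin y)
      (sin y - y * cos y) y := by
    refine ((((hasDerivAt_cos y).const_mul 2).const_sub 2).sub
      ((hasDerivAt_id' y).mul (hasDerivAt_sin y))).congr_deriv ?_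
    ring
  have := lt_of_hasDerivAt_pos hderiv
    (fun y hy ↦ sub_pos.mpr (mul_cos_lt_sin hy.1 (hy.2.trans h))) h0
  simp only [cos_zero, sin_zero] at this
  linarith

lemma three_mul_sin_lt_mul_two_add_cos {x : ℝ} (h0 : 0 < x) (h : x < π) :
    3 * sin x < x * (2 + cos x) := by
  have hderiv (y : ℝ) : HasDerivAt (fun y ↦ y * (2 + cos y) - 3 * sin y)
      (2 - 2 * cos y - y * sin y) y := by
    refine (((hasDerivAt_id' y).mul ((hasDerivAt_cos y).const_add 2)).sub
      ((hasDerivAt_sin y).const_mul 3)).congr_deriv ?_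
    ring
  have := lt_of_hasDerivAt_pos hderiv
    (fun y hy ↦ sub_pos.mpr (mul_sin_lt_two_sub_two_mul_cos hy.1 (hy.2.trans h))) h0
  simp only [cos_zero, sin_zero] at this
  linarith

lemma three_lt_two_mul_div_sin_add_div_tan_of_pos {x : ℝ} (h0 : 0 < x) (h : x < π) :
    3 < 2 * (x / sin x) + x / tan x := by
  have hsin : 0 < sin x := sin_pos_of_pos_of_lt_pi h0 h
  have : 2 * (x / sin x) + x / tan x = x * (2 + cos x) / sin x := by
    rw [tan_eq_sin_div_cos]; field_simp
  rw [this, lt_div_iff₀ hsin]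
  exact three_mul_sin_lt_mul_two_add_cos h0 h

lemma three_lt_two_mul_div_sin_add_div_tan {x : ℝ} (h0 : 0 < |x|) (h : |x| < π) :
    3 < 2 * (x / sin x) + x / tan x := by
  rcases abs_choice x with hx | hx <;> rw [hx] at h0 h
  · exact three_lt_two_mul_div_sin_add_div_tan_of_pos h0 h
  · simpa only [sin_neg, tan_neg, neg_div_neg_eq] using
      three_lt_two_mul_div_sin_add_div_tan_of_pos h0 h

theorem stmt_5 (x : ℝ) (h1 : 0 < |x|) (h2 : |x| < π / 2) :
    (1 / 2) * ((x / sin x) ^ 2 + x / tan x) > (2 * (x / sin x) + x / tan x) / 3 ∧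
      (2 * (x / sin x) + x / tan x) / 3 > 1 := by
  have huygens := three_lt_two_mul_div_sin_add_div_tan h1 (by linarith [pi_pos])
  exact ⟨by nlinarith [sq_nonneg (x / sin x - 1)], by linarith⟩
end

section
/- For all real x with 0 < x < π/2, (x/sin x)^2 + x/tan x < 2 + (2/45)·x^3·tan x. -/
open Real

lemma aux_mono {f f' : ℝ → ℝ} (hd : ∀ y, HasDerivAt f (f' y) y)
    (h0 : f 0 = 0) (hf' : ∀ y, 0 ≤ y → 0 ≤ f' y) {x : ℝ} (hx : 0 ≤ x) : 0 ≤ f x := by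
  have hmono : MonotoneOn f (Set.Ici 0) := by
    apply monotoneOn_of_deriv_nonneg (convex_Ici 0)
    · have hdiff : Differentiable ℝ f := fun y => (hd y).differentiableAt
      exact hdiff.continuous.continuousOn
    · intro y _
      exact (hd y).differentiableAt.differentiableWithinAt
    · intro y hy
      rw [interior_Ici] at hy
      rw [(hd y).deriv]
      exact hf' y hy.le
  have h := hmono Set.self_mem_Ici hx hx
  rw [h0] at h
  exact h
lemma sin_ge3 (x : ℝ) (hx : 0 ≤ x) : x - x ^ 3 / 6 ≤ sin x := by
  have key := aux_mono (f := fun y : ℝ => sin y - (y - y ^ 3 / 6))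
      (f' := fun y : ℝ => cos y - (1 - y ^ 2 / 2))
      (fun y => ((Real.hasDerivAt_sin y).sub ((hasDerivAt_id y).sub ((hasDerivAt_pow 3 y).div_const 6))).congr_deriv (by push_cast; ring))
      (by norm_num) (fun y hy => by have hb := Real.one_sub_sq_div_two_le_cos (x := y); linarith) hx
  linarith

lemma cos_le4 (x : ℝ) (hx : 0 ≤ x) : cos x ≤ 1 - x ^ 2 / 2 + x ^ 4 / 24 := by
  have key := aux_mono (f := fun y : ℝ => (1 - y ^ 2 / 2 + y ^ 4 / 24) - cos y)
      (f' := fun y : ℝ => sin y - (y - y ^ 3 / 6))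
      (fun y => ((((hasDerivAt_const y (1:ℝ)).sub ((hasDerivAt_pow 2 y).div_const 2)).add ((hasDerivAt_pow 4 y).div_const 24)).sub (Real.hasDerivAt_cos y)).congr_deriv (by push_cast; ring))
      (by norm_num) (fun y hy => by have hb := sin_ge3 y hy; linarith) hx
  linarith

lemma sin_le5 (x : ℝ) (hx : 0 ≤ x) : sin x ≤ x - x ^ 3 / 6 + x ^ 5 / 120 := by
  have key := aux_mono (f := fun y : ℝ => (y - y ^ 3 / 6 + y ^ 5 / 120) - sin y)
      (f' := fun y : ℝ => (1 - y ^ 2 / 2 + y ^ 4 / 24) - cos y)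
      (fun y => ((((hasDerivAt_id y).sub ((hasDerivAt_pow 3 y).div_const 6)).add ((hasDerivAt_pow 5 y).div_const 120)).sub (Real.hasDerivAt_sin y)).congr_deriv (by push_cast; ring))
      (by norm_num) (fun y hy => by have hb := cos_le4 y hy; linarith) hx
  linarith

lemma cos_ge6 (x : ℝ) (hx : 0 ≤ x) : 1 - x ^ 2 / 2 + x ^ 4 / 24 - x ^ 6 / 720 ≤ cos x := by
  have key := aux_mono (f := fun y : ℝ => cos y - (1 - y ^ 2 / 2 + y ^ 4 / 24 - y ^ 6 / 720))
      (f' := fun y : ℝ => (y - y ^ 3 / 6 + y ^ 5 / 120) - sin y)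
      (fun y => ((Real.hasDerivAt_cos y).sub ((((hasDerivAt_const y (1:ℝ)).sub ((hasDerivAt_pow 2 y).div_const 2)).add ((hasDerivAt_pow 4 y).div_const 24)).sub ((hasDerivAt_pow 6 y).div_const 720))).congr_deriv (by push_cast; ring))
      (by norm_num) (fun y hy => by have hb := sin_le5 y hy; linarith) hx
  linarith

lemma sin_ge7 (x : ℝ) (hx : 0 ≤ x) : x - x ^ 3 / 6 + x ^ 5 / 120 - x ^ 7 / 5040 ≤ sin x := by
  have key := aux_mono (f := fun y : ℝ => sin y - (y - y ^ 3 / 6 + y ^ 5 / 120 - y ^ 7 / 5040))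
      (f' := fun y : ℝ => cos y - (1 - y ^ 2 / 2 + y ^ 4 / 24 - y ^ 6 / 720))
      (fun y => ((Real.hasDerivAt_sin y).sub ((((hasDerivAt_id y).sub ((hasDerivAt_pow 3 y).div_const 6)).add ((hasDerivAt_pow 5 y).div_const 120)).sub ((hasDerivAt_pow 7 y).div_const 5040))).congr_deriv (by push_cast; ring))
      (by norm_num) (fun y hy => by have hb := cos_ge6 y hy; linarith) hx
  linarith

lemma cos_le8 (x : ℝ) (hx : 0 ≤ x) : cos x ≤ 1 - x ^ 2 / 2 + x ^ 4 / 24 - x ^ 6 / 720 + x ^ 8 / 40320 := by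
  have key := aux_mono (f := fun y : ℝ => (1 - y ^ 2 / 2 + y ^ 4 / 24 - y ^ 6 / 720 + y ^ 8 / 40320) - cos y)
      (f' := fun y : ℝ => sin y - (y - y ^ 3 / 6 + y ^ 5 / 120 - y ^ 7 / 5040))
      (fun y => ((((((hasDerivAt_const y (1:ℝ)).sub ((hasDerivAt_pow 2 y).div_const 2)).add ((hasDerivAt_pow 4 y).div_const 24)).sub ((hasDerivAt_pow 6 y).div_const 720)).add ((hasDerivAt_pow 8 y).div_const 40320)).sub (Real.hasDerivAt_cos y)).congr_deriv (by push_cast; ring))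
      (by norm_num) (fun y hy => by have hb := sin_ge7 y hy; linarith) hx
  linarith

lemma sin_le9 (x : ℝ) (hx : 0 ≤ x) : sin x ≤ x - x ^ 3 / 6 + x ^ 5 / 120 - x ^ 7 / 5040 + x ^ 9 / 362880 := by
  have key := aux_mono (f := fun y : ℝ => (y - y ^ 3 / 6 + y ^ 5 / 120 - y ^ 7 / 5040 + y ^ 9 / 362880) - sin y)
      (f' := fun y : ℝ => (1 - y ^ 2 / 2 + y ^ 4 / 24 - y ^ 6 / 720 + y ^ 8 / 40320) - cos y)
      (fun y => ((((((hasDerivAt_id y).sub ((hasDerivAt_pow 3 y).div_const 6)).add ((hasDerivAt_pow 5 y).div_const 120)).sub ((hasDerivAt_pow 7 y).div_const 5040)).add ((hasDerivAt_pow 9 y).div_const 362880)).sub (Real.hasDerivAt_sin y)).congr_deriv (by push_cast; ring))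
      (by norm_num) (fun y hy => by have hb := cos_le8 y hy; linarith) hx
  linarith

lemma cos_ge10 (x : ℝ) (hx : 0 ≤ x) : 1 - x ^ 2 / 2 + x ^ 4 / 24 - x ^ 6 / 720 + x ^ 8 / 40320 - x ^ 10 / 3628800 ≤ cos x := by
  have key := aux_mono (f := fun y : ℝ => cos y - (1 - y ^ 2 / 2 + y ^ 4 / 24 - y ^ 6 / 720 + y ^ 8 / 40320 - y ^ 10 / 3628800))
      (f' := fun y : ℝ => (y - y ^ 3 / 6 + y ^ 5 / 120 - y ^ 7 / 5040 + y ^ 9 / 362880) - sin y)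
      (fun y => ((Real.hasDerivAt_cos y).sub ((((((hasDerivAt_const y (1:ℝ)).sub ((hasDerivAt_pow 2 y).div_const 2)).add ((hasDerivAt_pow 4 y).div_const 24)).sub ((hasDerivAt_pow 6 y).div_const 720)).add ((hasDerivAt_pow 8 y).div_const 40320)).sub ((hasDerivAt_pow 10 y).div_const 3628800))).congr_deriv (by push_cast; ring))
      (by norm_num) (fun y hy => by have hb := sin_le9 y hy; linarith) hx
  linarith

lemma sin_ge11 (x : ℝ) (hx : 0 ≤ x) : x - x ^ 3 / 6 + x ^ 5 / 120 - x ^ 7 / 5040 + x ^ 9 / 362880 - x ^ 11 / 39916800 ≤ sin x := by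
  have key := aux_mono (f := fun y : ℝ => sin y - (y - y ^ 3 / 6 + y ^ 5 / 120 - y ^ 7 / 5040 + y ^ 9 / 362880 - y ^ 11 / 39916800))
      (f' := fun y : ℝ => cos y - (1 - y ^ 2 / 2 + y ^ 4 / 24 - y ^ 6 / 720 + y ^ 8 / 40320 - y ^ 10 / 3628800))
      (fun y => ((Real.hasDerivAt_sin y).sub ((((((hasDerivAt_id y).sub ((hasDerivAt_pow 3 y).div_const 6)).add ((hasDerivAt_pow 5 y).div_const 120)).sub ((hasDerivAt_pow 7 y).div_const 5040)).add ((hasDerivAt_pow 9 y).div_const 362880)).sub ((hasDerivAt_pow 11 y).div_const 39916800))).congr_deriv (by push_cast; ring))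
      (by norm_num) (fun y hy => by have hb := cos_ge10 y hy; linarith) hx
  linarith

lemma cos_le12 (x : ℝ) (hx : 0 ≤ x) : cos x ≤ 1 - x ^ 2 / 2 + x ^ 4 / 24 - x ^ 6 / 720 + x ^ 8 / 40320 - x ^ 10 / 3628800 + x ^ 12 / 479001600 := by
  have key := aux_mono (f := fun y : ℝ => (1 - y ^ 2 / 2 + y ^ 4 / 24 - y ^ 6 / 720 + y ^ 8 / 40320 - y ^ 10 / 3628800 + y ^ 12 / 479001600) - cos y)
      (f' := fun y : ℝ => sin y - (y - y ^ 3 / 6 + y ^ 5 / 120 - y ^ 7 / 5040 + y ^ 9 / 362880 - y ^ 11 / 39916800))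
      (fun y => ((((((((hasDerivAt_const y (1:ℝ)).sub ((hasDerivAt_pow 2 y).div_const 2)).add ((hasDerivAt_pow 4 y).div_const 24)).sub ((hasDerivAt_pow 6 y).div_const 720)).add ((hasDerivAt_pow 8 y).div_const 40320)).sub ((hasDerivAt_pow 10 y).div_const 3628800)).add ((hasDerivAt_pow 12 y).div_const 479001600)).sub (Real.hasDerivAt_cos y)).congr_deriv (by push_cast; ring))
      (by norm_num) (fun y hy => by have hb := sin_ge11 y hy; linarith) hx
  linarith

lemma sin_le13 (x : ℝ) (hx : 0 ≤ x) : sin x ≤ x - x ^ 3 / 6 + x ^ 5 / 120 - x ^ 7 / 5040 + x ^ 9 / 362880 - x ^ 11 / 39916800 + x ^ 13 / 6227020800 := by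
  have key := aux_mono (f := fun y : ℝ => (y - y ^ 3 / 6 + y ^ 5 / 120 - y ^ 7 / 5040 + y ^ 9 / 362880 - y ^ 11 / 39916800 + y ^ 13 / 6227020800) - sin y)
      (f' := fun y : ℝ => (1 - y ^ 2 / 2 + y ^ 4 / 24 - y ^ 6 / 720 + y ^ 8 / 40320 - y ^ 10 / 3628800 + y ^ 12 / 479001600) - cos y)
      (fun y => ((((((((hasDerivAt_id y).sub ((hasDerivAt_pow 3 y).div_const 6)).add ((hasDerivAt_pow 5 y).div_const 120)).sub ((hasDerivAt_pow 7 y).div_const 5040)).add ((hasDerivAt_pow 9 y).div_const 362880)).sub ((hasDerivAt_pow 11 y).div_const 39916800)).add ((hasDerivAt_pow 13 y).div_const 6227020800)).sub (Real.hasDerivAt_sin y)).congr_deriv (by push_cast; ring))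
      (by norm_num) (fun y hy => by have hb := cos_le12 y hy; linarith) hx
  linarith
lemma P_pos (x : ℝ) (hx : 0 < x) (hx2 : x ≤ 3/2) :
    0 < (8/315)*x^8 - (4/1575)*x^10 - (27/140800)*x^12
      - (7533/128128000)*x^14 - (729/64064000)*x^16 := by
  have h2 : x^2 ≤ 9/4 := by nlinarith
  have e1 : 0 ≤ (9/4 - x^2) * x^2 := mul_nonneg (by linarith) (sq_nonneg x)
  have e2 : 0 ≤ (9/4 - x^2) * x^4 := mul_nonneg (by linarith) (by positivity)
  have e3 : 0 ≤ (9/4 - x^2) * x^6 := mul_nonneg (by linarith) (by positivity)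
  have h4 : x^4 ≤ 81/16 := by nlinarith [e1, h2]
  have h6 : x^6 ≤ 729/64 := by nlinarith [e2, h4]
  have h8 : x^8 ≤ 6561/256 := by nlinarith [e3, h6]
  have hbr : 0 < 8/315 - (4/1575)*x^2 - (27/140800)*x^4
      - (7533/128128000)*x^6 - (729/64064000)*x^8 := by linarith
  nlinarith [mul_pos (pow_pos hx 8) hbr]

lemma h_pos (x : ℝ) (hx : 0 < x) (hx2 : x ≤ 3/2) :
    0 < 2*cos x - 2*cos (3*x) - 4*x^2*cos x - x*sin x - x*sin (3*x)
      + (2/15)*x^3*sin x - (2/45)*x^3*sin (3*x) := by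
  have hx0 : (0:ℝ) ≤ x := hx.le
  have hx3 : (0:ℝ) ≤ 3*x := by linarith
  have hA := cos_ge10 x hx0
  have hB := cos_le12 (3*x) hx3
  have hC := cos_le8 x hx0
  have hD := sin_le9 x hx0
  have hE := sin_le13 (3*x) hx3
  have hF := sin_ge7 x hx0
  have p1 : 0 ≤ x^2 * ((1 - x^2/2 + x^4/24 - x^6/720 + x^8/40320) - cos x) :=
    mul_nonneg (by positivity) (by linarith)
  have p2 : 0 ≤ x * ((x - x^3/6 + x^5/120 - x^7/5040 + x^9/362880) - sin x) :=
    mul_nonneg hx0 (by linarith)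
  have p3 : 0 ≤ x * ((3*x - (3*x)^3/6 + (3*x)^5/120 - (3*x)^7/5040 + (3*x)^9/362880
      - (3*x)^11/39916800 + (3*x)^13/6227020800) - sin (3*x)) :=
    mul_nonneg hx0 (by linarith)
  have p4 : 0 ≤ x^3 * (sin x - (x - x^3/6 + x^5/120 - x^7/5040)) :=
    mul_nonneg (by positivity) (by linarith)
  have p5 : 0 ≤ x^3 * ((3*x - (3*x)^3/6 + (3*x)^5/120 - (3*x)^7/5040 + (3*x)^9/362880
      - (3*x)^11/39916800 + (3*x)^13/6227020800) - sin (3*x)) :=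
    mul_nonneg (by positivity) (by linarith)
  have hP := P_pos x hx hx2
  linarith [hA, hB, p1, p2, p3, p4, p5, hP]

theorem stmt_9 (x : ℝ) (h1 : 0 < x) (h2 : x < π / 2) :
    (x / sin x) ^ 2 + x / tan x < 2 + (2 / 45) * x ^ 3 * tan x := by
  have hpi := Real.pi_gt_d6
  have hpi2 := Real.pi_lt_d6
  have hs : 0 < sin x := Real.sin_pos_of_pos_of_lt_pi h1 (by linarith)
  have hc : 0 < cos x := Real.cos_pos_of_mem_Ioo ⟨by linarith, h2⟩
  have htan : tan x = sin x / cos x := Real.tan_eq_sin_div_cos x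
  rcases le_or_gt x (3/2) with hx2 | hx2
  · -- small case
    have hh := h_pos x h1 hx2
    rw [Real.cos_three_mul, Real.sin_three_mul] at hh
    have r1 : sin x^2*cos x = cos x - cos x^3 := by
      rw [Real.sin_sq]; ring
    have r2 : sin x*cos x^2 = sin x - sin x^3 := by
      rw [Real.cos_sq']; ring
    have hnum : 0 < 2*sin x^2*cos x + 2/45*x^3*sin x^3 - x^2*cos x - x*sin x*cos x^2 := by
      nlinarith [hh, r1, r2]
    have hden : 0 < sin x^2 * cos x := by positivity
    have key : 0 < (2 + 2/45*x^3*(sin x/cos x)) - ((x/sin x)^2 + x/(sin x/cos x)) := by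
      have expand : (2 + 2/45*x^3*(sin x/cos x)) - ((x/sin x)^2 + x/(sin x/cos x))
          = (2*sin x^2*cos x + 2/45*x^3*sin x^3 - x^2*cos x - x*sin x*cos x^2)
            / (sin x^2 * cos x) := by
        field_simp
        ring
      rw [expand]
      exact div_pos hnum hden
    rw [htan]
    linarith [key]
  · -- large case
    have hxub : x < 1.5707965 := by linarith
    have hmem1 : (3:ℝ)/2 ∈ Set.Icc (-(π/2)) (π/2) := ⟨by linarith, by linarith⟩
    have hmem2 : x ∈ Set.Icc (-(π/2)) (π/2) := ⟨by linarith, by linarith⟩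
    have hsin32 : (0.9973:ℝ) ≤ sin (3/2) := by
      have := sin_ge7 (3/2) (by norm_num)
      norm_num at this ⊢
      linarith
    have hsin_lb : (0.9973:ℝ) ≤ sin x := by
      have := Real.strictMonoOn_sin hmem1 hmem2 hx2
      linarith
    have hcos32 : cos (3/2) ≤ (0.0708:ℝ) := by
      have := cos_le8 (3/2) (by norm_num)
      norm_num at this ⊢
      linarith
    have hcos_ub : cos x ≤ (0.0708:ℝ) := by
      have hm1 : (3:ℝ)/2 ∈ Set.Icc (0:ℝ) π := ⟨by norm_num, by linarith⟩
      have hm2 : x ∈ Set.Icc (0:ℝ) π := ⟨h1.le, by linarith⟩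
      have := Real.strictAntiOn_cos hm1 hm2 hx2
      linarith
    have hxt : x < tan x := Real.lt_tan h1 h2
    have htanpos : 0 < tan x := lt_trans h1 hxt
    have htan14 : (14:ℝ) ≤ tan x := by
      rw [htan, le_div_iff₀ hc]
      nlinarith [hsin_lb, hcos_ub, hc]
    have hB : x / tan x < 1 := (div_lt_one htanpos).2 hxt
    have hA : (x / sin x)^2 ≤ 2.49 := by
      rw [div_pow, div_le_iff₀ (by positivity)]
      nlinarith [hsin_lb, hxub, h1, hs]
    have hx3 : (27:ℝ)/8 ≤ x^3 := by
      have := pow_le_pow_left₀ (by norm_num : (0:ℝ) ≤ 3/2) hx2.le 3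
      norm_num at this
      linarith
    have hC : (27:ℝ)/8 * 14 ≤ x^3 * tan x := by
      nlinarith [mul_nonneg (by linarith : (0:ℝ) ≤ x^3 - 27/8) (by linarith : (0:ℝ) ≤ tan x - 14)]
    linarith [hA, hB, hC]
end
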